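/- arXiv:2602.15894 — 4 statements merged into one kernel-verified Lean document; each statement's English description precedes it below -/
import Mathlib

section
/- Let Y be a nonempty finite set, π_ref a strictly positive probability distribution on Y, r : Y → ℝ, and λ₁ > 0, λ₂ > 0. Define the QEMPO-KL policy π_QK(y) = π_ref(y)^{λ₂/(λ₂+1)}·exp(λ₁·r(y)/(λ₂+1)) / Z, where Z = ∑_{y'∈Y} π_ref(y')^{λ₂/(λ₂+1)}·exp(λ₁·r(y')/(λ₂+1)). Then for every probability distribution π on Y satisfying both E_π[r] ≥ E_{π_QK}[r] and KL(π‖π_ref) ≤ KL(π_QK‖π_ref), one has H(π) ≤ H(π_QK); that is, π_QK solves the quality-and-KL-constrained entropy maximization problem max_π H(π) subject to E_π[r] ≥ E_{π_QK}[r] and KL(π‖π_ref) ≤ KL(π_QK‖π_ref). -/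
/-- The QEMPO-KL policy π_QK solves the quality-and-KL-constrained
entropy maximization problem: any distribution π with E_π[r] ≥ E_{π_QK}[r] and
KL(π‖π_ref) ≤ KL(π_QK‖π_ref) satisfies H(π) ≤ H(π_QK). -/
theorem stmt_3 {Y : Type*} [Fintype Y] [Nonempty Y]
    (πref : Y → ℝ) (href_pos : ∀ y, 0 < πref y) (href_sum : ∑ y, πref y = 1)
    (r : Y → ℝ) (lam₁ lam₂ : ℝ) (hlam₁ : 0 < lam₁) (hlam₂ : 0 < lam₂)
    (Z : ℝ)
    (hZ : Z = ∑ y, (πref y) ^ (lam₂ / (lam₂ + 1)) * Real.exp (lam₁ * r y / (lam₂ + 1)))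
    (πQK : Y → ℝ)
    (hπQK : ∀ y, πQK y = (πref y) ^ (lam₂ / (lam₂ + 1)) * Real.exp (lam₁ * r y / (lam₂ + 1)) / Z)
    (π : Y → ℝ) (hπ_nonneg : ∀ y, 0 ≤ π y) (hπ_sum : ∑ y, π y = 1)
    (hreward : ∑ y, πQK y * r y ≤ ∑ y, π y * r y)
    (hKL : ∑ y, π y * Real.log (π y / πref y) ≤ ∑ y, πQK y * Real.log (πQK y / πref y)) :
    (-∑ y, π y * Real.log (π y)) ≤ (-∑ y, πQK y * Real.log (πQK y)) := by
  have hL : (0:ℝ) < lam₂ + 1 := by linarith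
  have hZpos : 0 < Z := by
    rw [hZ]
    exact Finset.sum_pos (fun y _ =>
      mul_pos (Real.rpow_pos_of_pos (href_pos y) _) (Real.exp_pos _))
      Finset.univ_nonempty
  have hq_pos : ∀ y, 0 < πQK y := by
    intro y
    rw [hπQK]
    exact div_pos (mul_pos (Real.rpow_pos_of_pos (href_pos y) _) (Real.exp_pos _)) hZpos
  have hq_sum : ∑ y, πQK y = 1 := by
    simp only [hπQK]
    rw [← Finset.sum_div, ← hZ, div_self (ne_of_gt hZpos)]
  have hlogq : ∀ y, Real.log (πQK y) =
      (lam₂ / (lam₂ + 1)) * Real.log (πref y) + lam₁ * r y / (lam₂ + 1) - Real.log Z := by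
    intro y
    rw [hπQK, Real.log_div (ne_of_gt (mul_pos (Real.rpow_pos_of_pos (href_pos y) _)
        (Real.exp_pos _))) (ne_of_gt hZpos),
      Real.log_mul (ne_of_gt (Real.rpow_pos_of_pos (href_pos y) _)) (Real.exp_ne_zero _),
      Real.log_rpow (href_pos y), Real.log_exp]
  -- Gibbs inequality: ∑ π log πQK ≤ ∑ π log π
  have gibbs : ∑ y, π y * Real.log (πQK y) ≤ ∑ y, π y * Real.log (π y) := by
    have key : ∀ y, π y - πQK y ≤ π y * Real.log (π y) - π y * Real.log (πQK y) := by
      intro y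
      rcases eq_or_lt_of_le (hπ_nonneg y) with h | h
      · rw [← h]; simp; exact (hq_pos y).le
      · have h1 := Real.log_le_sub_one_of_pos (div_pos (hq_pos y) h)
        rw [Real.log_div (ne_of_gt (hq_pos y)) (ne_of_gt h)] at h1
        have h2 : πQK y / π y - 1 = (πQK y - π y) / π y := by field_simp
        rw [h2, le_div_iff₀ h] at h1; nlinarith
    have hs : ∑ y, (π y - πQK y) ≤ ∑ y, (π y * Real.log (π y) - π y * Real.log (πQK y)) :=
      Finset.sum_le_sum (fun y _ => key y)
    rw [Finset.sum_sub_distrib, Finset.sum_sub_distrib, hπ_sum, hq_sum] at hs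
    linarith
  -- expand ∑ w log πQK for any prob weight w
  have expand : ∀ w : Y → ℝ, ∑ y, w y = 1 →
      ∑ y, w y * Real.log (πQK y) =
        (lam₂ / (lam₂ + 1)) * (∑ y, w y * Real.log (πref y))
          + (lam₁ / (lam₂ + 1)) * (∑ y, w y * r y) - Real.log Z := by
    intro w hw
    have : ∀ y, w y * Real.log (πQK y) =
        (lam₂ / (lam₂ + 1)) * (w y * Real.log (πref y))
          + (lam₁ / (lam₂ + 1)) * (w y * r y) - Real.log Z * w y := by
      intro y; rw [hlogq y]; ring
    rw [Finset.sum_congr rfl (fun y _ => this y), Finset.sum_sub_distrib,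
      Finset.sum_add_distrib, ← Finset.mul_sum, ← Finset.mul_sum, ← Finset.mul_sum, hw, mul_one]
  -- split KL sums
  have splitKL : ∀ w : Y → ℝ, (∀ y, 0 ≤ w y) →
      ∑ y, w y * Real.log (w y / πref y) =
        ∑ y, w y * Real.log (w y) - ∑ y, w y * Real.log (πref y) := by
    intro w hw
    rw [← Finset.sum_sub_distrib]
    refine Finset.sum_congr rfl (fun y _ => ?_)
    rcases eq_or_lt_of_le (hw y) with h | h
    · rw [← h]; ring
    · rw [Real.log_div (ne_of_gt h) (ne_of_gt (href_pos y))]; ring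
  have hKL' := hKL
  rw [splitKL π hπ_nonneg, splitKL πQK (fun y => (hq_pos y).le)] at hKL'
  have e1 := expand π hπ_sum
  have e2 := expand πQK hq_sum
  -- πQK satisfies Gibbs with equality: ∑ q log q = expansion
  have hc : 0 < lam₂ / (lam₂ + 1) := div_pos hlam₂ hL
  have hc1 : lam₂ / (lam₂ + 1) < 1 := by
    rw [div_lt_one hL]; linarith
  have hl1 : 0 < lam₁ / (lam₂ + 1) := div_pos hlam₁ hL
  nlinarith [gibbs, hKL', e1, e2, hreward,
    mul_le_mul_of_nonneg_left hreward hl1.le]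
end

section
/- Let Y be a nonempty finite set, π_ref a strictly positive probability distribution on Y, r : Y → ℝ, and λ₁ > 0, λ₂ > 0. Set β = λ₂/λ₁ (so that 1/β = λ₁/λ₂). Define the RLHF policy π_RLHF(y) = π_ref(y)·exp(r(y)/β) / Z₁ with Z₁ = ∑_{y'} π_ref(y')·exp(r(y')/β), and the QEMPO-KL policy π_QK(y) = π_ref(y)^{λ₂/(λ₂+1)}·exp(λ₁·r(y)/(λ₂+1)) / Z₂ with Z₂ = ∑_{y'} π_ref(y')^{λ₂/(λ₂+1)}·exp(λ₁·r(y')/(λ₂+1)). Then H(π_QK) ≥ H(π_RLHF). -/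
/-!
Raising `π_RLHF` to the power `α = λ₂/(λ₂+1) ∈ (0,1)` and renormalising gives exactly `π_QK`, so
`π_QK` is the escort distribution of order `α` of `π_RLHF`. For a strictly positive distribution `p`
and `0 ≤ α < 1`, Gibbs' inequality applied twice, once to `p` against its escort `p_α` and once to
`p_α` against `p`, gives `H(p) ≤ H_α(p) ≤ H(p_α)`, where `H_α(p) = log (∑ p^α) / (1 - α)` is the Rényi
entropy of order `α`.
-/

open Real Finset

section

variable {ι : Type*} [Fintype ι]

theorem sum_mul_log_le_sum_mul_log {p q : ι → ℝ} (hp : ∀ i, 0 < p i) (hq : ∀ i, 0 < q i)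
    (hqp : ∑ i, q i ≤ ∑ i, p i) :
    ∑ i, p i * log (q i) ≤ ∑ i, p i * log (p i) := by
  have hterm : ∀ i, p i * log (q i) - p i * log (p i) ≤ q i - p i := fun i => calc
    p i * log (q i) - p i * log (p i) = p i * log (q i / p i) := by
      rw [log_div (hq i).ne' (hp i).ne']; ring
    _ ≤ p i * (q i / p i - 1) :=
      mul_le_mul_of_nonneg_left (log_le_sub_one_of_pos (div_pos (hq i) (hp i))) (hp i).le
    _ = q i - p i := by rw [mul_sub, mul_div_cancel₀ _ (hp i).ne', mul_one]
  have := sum_le_sum fun i (_ : i ∈ univ) => hterm i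
  rw [sum_sub_distrib, sum_sub_distrib] at this
  linarith

noncomputable def normalized (u : ι → ℝ) (i : ι) : ℝ := u i / ∑ j, u j

theorem normalized_pos [Nonempty ι] {u : ι → ℝ} (hu : ∀ i, 0 < u i) (i : ι) :
    0 < normalized u i :=
  div_pos (hu i) (sum_pos (fun j _ => hu j) univ_nonempty)

theorem sum_normalized {u : ι → ℝ} (hu : ∑ i, u i ≠ 0) : ∑ i, normalized u i = 1 := by
  simp only [normalized, ← sum_div, div_self hu]

theorem normalized_const_mul {c : ℝ} (hc : c ≠ 0) (u : ι → ℝ) :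
    normalized (fun i => c * u i) = normalized u := by
  funext i
  simp only [normalized, ← mul_sum, mul_div_mul_left _ _ hc]

noncomputable def escort (α : ℝ) (p : ι → ℝ) : ι → ℝ := normalized fun i => p i ^ α

noncomputable def renyiEntropy (α : ℝ) (p : ι → ℝ) : ℝ := log (∑ i, p i ^ α) / (1 - α)

theorem escort_normalized [Nonempty ι] {u : ι → ℝ} (hu : ∀ i, 0 < u i) (α : ℝ) :
    escort α (normalized u) = normalized fun i => u i ^ α := by
  have hS : 0 < ∑ j, u j := sum_pos (fun j _ => hu j) univ_nonempty
  have hpow : ∀ i, normalized u i ^ α = ((∑ j, u j) ^ α)⁻¹ * u i ^ α := fun i => by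
    rw [normalized, div_rpow (hu i).le hS.le, inv_mul_eq_div]
  simp only [escort, hpow]
  exact normalized_const_mul (inv_ne_zero (rpow_pos_of_pos hS α).ne') _

variable {p : ι → ℝ} (hp : ∀ i, 0 < p i) (hp_sum : ∑ i, p i = 1)
include hp

theorem escort_pos [Nonempty ι] (α : ℝ) (i : ι) : 0 < escort α p i :=
  normalized_pos (fun j => rpow_pos_of_pos (hp j) α) i

theorem sum_escort [Nonempty ι] (α : ℝ) : ∑ i, escort α p i = 1 :=
  sum_normalized (sum_pos (fun j _ => rpow_pos_of_pos (hp j) α) univ_nonempty).ne'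

theorem sum_mul_log_escort [Nonempty ι] (α : ℝ) {w : ι → ℝ} (hw : ∑ i, w i = 1) :
    ∑ i, w i * log (escort α p i)
      = α * ∑ i, w i * log (p i) - log (∑ i, p i ^ α) := by
  have hZ : 0 < ∑ i, p i ^ α := sum_pos (fun j _ => rpow_pos_of_pos (hp j) α) univ_nonempty
  have hlog : ∀ i, log (escort α p i) = α * log (p i) - log (∑ j, p j ^ α) := fun i => by
    rw [escort, normalized, log_div (rpow_pos_of_pos (hp i) α).ne' hZ.ne', log_rpow (hp i)]
  simp only [hlog, mul_sub, sum_sub_distrib, ← sum_mul, hw, one_mul, mul_sum]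
  congr 1
  exact sum_congr rfl fun i _ => by ring

include hp_sum

theorem entropy_le_renyiEntropy [Nonempty ι] {α : ℝ} (hα : α < 1) :
    -∑ i, p i * log (p i) ≤ renyiEntropy α p := by
  have hgibbs := sum_mul_log_le_sum_mul_log hp (escort_pos hp α)
    (by rw [sum_escort hp, hp_sum])
  rw [sum_mul_log_escort hp α hp_sum] at hgibbs
  rw [renyiEntropy, le_div_iff₀ (by linarith)]
  nlinarith

theorem renyiEntropy_le_entropy_escort [Nonempty ι] {α : ℝ} (hα₀ : 0 ≤ α) (hα : α < 1) :
    renyiEntropy α p ≤ -∑ i, escort α p i * log (escort α p i) := by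
  have hgibbs := sum_mul_log_le_sum_mul_log (escort_pos hp α) hp
    (by rw [sum_escort hp, hp_sum])
  have hself := sum_mul_log_escort hp α (sum_escort hp α)
  rw [hself] at hgibbs ⊢
  rw [renyiEntropy, div_le_iff₀ (by linarith)]
  nlinarith

theorem entropy_le_entropy_escort [Nonempty ι] {α : ℝ} (hα₀ : 0 ≤ α) (hα : α < 1) :
    -∑ i, p i * log (p i) ≤ -∑ i, escort α p i * log (escort α p i) :=
  (entropy_le_renyiEntropy hp hp_sum hα).trans (renyiEntropy_le_entropy_escort hp hp_sum hα₀ hα)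

end

theorem stmt_4_general {Y : Type*} [Fintype Y] [Nonempty Y]
    (πref : Y → ℝ) (href_pos : ∀ y, 0 < πref y)
    (r : Y → ℝ) (lam₁ lam₂ : ℝ) (hlam₂ : 0 < lam₂)
    (β : ℝ) (hβ : β = lam₂ / lam₁)
    (Z₁ : ℝ) (hZ₁ : Z₁ = ∑ y, πref y * Real.exp (r y / β))
    (πRLHF : Y → ℝ) (hπRLHF : ∀ y, πRLHF y = πref y * Real.exp (r y / β) / Z₁)
    (Z₂ : ℝ)
    (hZ₂ : Z₂ = ∑ y, (πref y) ^ (lam₂ / (lam₂ + 1)) * Real.exp (lam₁ * r y / (lam₂ + 1)))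
    (πQK : Y → ℝ)
    (hπQK : ∀ y, πQK y = (πref y) ^ (lam₂ / (lam₂ + 1)) * Real.exp (lam₁ * r y / (lam₂ + 1)) / Z₂) :
    (-∑ y, πRLHF y * Real.log (πRLHF y)) ≤ (-∑ y, πQK y * Real.log (πQK y)) := by
  set α := lam₂ / (lam₂ + 1)
  have hα₀ : 0 ≤ α := by positivity
  have hα : α < 1 := (div_lt_one (by linarith)).mpr (by linarith)
  have hweight_pos : ∀ y, 0 < πref y * exp (r y / β) := fun y => by
    have := href_pos y; positivity
  have hRLHF : πRLHF = normalized fun y => πref y * exp (r y / β) := by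
    funext y; rw [hπRLHF, hZ₁, normalized]
  have hweight_rpow : ∀ y, (πref y * exp (r y / β)) ^ α
      = πref y ^ α * exp (lam₁ * r y / (lam₂ + 1)) := fun y => by
    rw [mul_rpow (href_pos y).le (exp_pos _).le, ← exp_mul, hβ]
    congr 2
    simp only [α]
    field_simp
  have hQK : πQK = escort α πRLHF := by
    rw [hRLHF, escort_normalized hweight_pos]
    funext y; simp only [normalized, hweight_rpow, hπQK, hZ₂]
  rw [hQK, hRLHF]
  exact entropy_le_entropy_escort (normalized_pos hweight_pos)
    (sum_normalized (sum_pos (fun y _ => hweight_pos y) univ_nonempty).ne') hα₀ hα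

/-- With β = λ₂/λ₁, the QEMPO-KL policy has entropy at least that of the
RLHF policy: H(π_QK) ≥ H(π_RLHF). -/
theorem stmt_4 {Y : Type*} [Fintype Y] [Nonempty Y]
    (πref : Y → ℝ) (href_pos : ∀ y, 0 < πref y) (href_sum : ∑ y, πref y = 1)
    (r : Y → ℝ) (lam₁ lam₂ : ℝ) (hlam₁ : 0 < lam₁) (hlam₂ : 0 < lam₂)
    (β : ℝ) (hβ : β = lam₂ / lam₁)
    (Z₁ : ℝ) (hZ₁ : Z₁ = ∑ y, πref y * Real.exp (r y / β))
    (πRLHF : Y → ℝ) (hπRLHF : ∀ y, πRLHF y = πref y * Real.exp (r y / β) / Z₁)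
    (Z₂ : ℝ)
    (hZ₂ : Z₂ = ∑ y, (πref y) ^ (lam₂ / (lam₂ + 1)) * Real.exp (lam₁ * r y / (lam₂ + 1)))
    (πQK : Y → ℝ)
    (hπQK : ∀ y, πQK y = (πref y) ^ (lam₂ / (lam₂ + 1)) * Real.exp (lam₁ * r y / (lam₂ + 1)) / Z₂) :
    (-∑ y, πRLHF y * Real.log (πRLHF y)) ≤ (-∑ y, πQK y * Real.log (πQK y)) :=
  stmt_4_general πref href_pos r lam₁ lam₂ hlam₂ β hβ Z₁ hZ₁ πRLHF hπRLHF Z₂ hZ₂ πQK hπQK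
end

section
/- Let Y be a nonempty finite set, r : Y → ℝ, λ₁ > 0, λ₂ > 0, and let π_ref be the uniform distribution on Y (π_ref(y) = 1/|Y| for all y). Define the QEMPO-KL policy π_QK(y) = π_ref(y)^{λ₂/(λ₂+1)}·exp(λ₁·r(y)/(λ₂+1)) / Z₂ with Z₂ = ∑_{y'} π_ref(y')^{λ₂/(λ₂+1)}·exp(λ₁·r(y')/(λ₂+1)), and for λ > 0 the QEMPO policy π_Q(λ)(y) = exp(λ·r(y)) / Z(λ) with Z(λ) = ∑_{y'} exp(λ·r(y')). Then for every λ with 0 < λ ≤ λ₁/(λ₂+1), one has H(π_Q(λ)) ≥ H(π_QK). -/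
open Finset

/-- Chebyshev-type monotonicity: the unnormalized expectation cross-inequality. -/
lemma expectation_mono_aux {Y : Type*} [Fintype Y] (r : Y → ℝ) {lam mu : ℝ}
    (h : lam ≤ mu) :
    (∑ i, Real.exp (lam * r i) * r i) * (∑ j, Real.exp (mu * r j)) ≤
    (∑ i, Real.exp (mu * r i) * r i) * (∑ j, Real.exp (lam * r j)) := by
  have key : ∀ i j : Y,
      Real.exp (lam * r i) * r i * Real.exp (mu * r j)
        + Real.exp (lam * r j) * r j * Real.exp (mu * r i)
      ≤ Real.exp (mu * r i) * r i * Real.exp (lam * r j)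
        + Real.exp (mu * r j) * r j * Real.exp (lam * r i) := by
    intro i j
    set a := Real.exp (lam * r i) with ha
    set b := Real.exp (lam * r j) with hb
    set c := Real.exp (mu * r i) with hc
    set d := Real.exp (mu * r j) with hd
    -- RHS - LHS = (r i - r j) * (b*c - a*d)
    rcases le_total (r i) (r j) with hr | hr
    · have hbc : b * c ≤ a * d := by
        rw [ha, hb, hc, hd, ← Real.exp_add, ← Real.exp_add]
        apply Real.exp_le_exp.mpr
        nlinarith [mul_le_mul_of_nonneg_left h (sub_nonneg.mpr hr)]
      nlinarith
    · have hbc : a * d ≤ b * c := by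
        rw [ha, hb, hc, hd, ← Real.exp_add, ← Real.exp_add]
        apply Real.exp_le_exp.mpr
        nlinarith [mul_le_mul_of_nonneg_left h (sub_nonneg.mpr hr)]
      nlinarith
  rw [Finset.sum_mul_sum, Finset.sum_mul_sum]
  have H := Finset.sum_le_sum (f := fun i : Y => ∑ j : Y,
      (Real.exp (lam * r i) * r i * Real.exp (mu * r j)
        + Real.exp (lam * r j) * r j * Real.exp (mu * r i)))
    (g := fun i : Y => ∑ j : Y,
      (Real.exp (mu * r i) * r i * Real.exp (lam * r j)
        + Real.exp (mu * r j) * r j * Real.exp (lam * r i)))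
    (fun i _ => Finset.sum_le_sum (fun j _ => key i j)) (s := Finset.univ)
  have e1 : ∀ (s t : ℝ → ℝ), True := fun _ _ => trivial
  have swap1 : ∑ i : Y, ∑ j : Y, Real.exp (lam * r j) * r j * Real.exp (mu * r i)
      = ∑ i : Y, ∑ j : Y, Real.exp (lam * r i) * r i * Real.exp (mu * r j) :=
    Finset.sum_comm
  have swap2 : ∑ i : Y, ∑ j : Y, Real.exp (mu * r j) * r j * Real.exp (lam * r i)
      = ∑ i : Y, ∑ j : Y, Real.exp (mu * r i) * r i * Real.exp (lam * r j) :=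
    Finset.sum_comm
  simp only [Finset.sum_add_distrib] at H
  rw [swap1, swap2] at H
  linarith

/-- With π_ref uniform, for every 0 < λ ≤ λ₁/(λ₂+1), the QEMPO policy
π_Q(λ) has entropy at least that of the QEMPO-KL policy: H(π_Q(λ)) ≥ H(π_QK). -/
theorem stmt_6 {Y : Type*} [Fintype Y] [Nonempty Y]
    (r : Y → ℝ) (lam₁ lam₂ : ℝ) (hlam₁ : 0 < lam₁) (hlam₂ : 0 < lam₂)
    (πref : Y → ℝ) (href : ∀ y, πref y = 1 / (Fintype.card Y : ℝ))
    (Z₂ : ℝ)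
    (hZ₂ : Z₂ = ∑ y, (πref y) ^ (lam₂ / (lam₂ + 1)) * Real.exp (lam₁ * r y / (lam₂ + 1)))
    (πQK : Y → ℝ)
    (hπQK : ∀ y, πQK y = (πref y) ^ (lam₂ / (lam₂ + 1)) * Real.exp (lam₁ * r y / (lam₂ + 1)) / Z₂)
    (lam : ℝ) (hlam : 0 < lam) (hlam_le : lam ≤ lam₁ / (lam₂ + 1))
    (Z : ℝ) (hZ : Z = ∑ y, Real.exp (lam * r y))
    (πQ : Y → ℝ) (hπQ : ∀ y, πQ y = Real.exp (lam * r y) / Z) :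
    (-∑ y, πQK y * Real.log (πQK y)) ≤ (-∑ y, πQ y * Real.log (πQ y)) := by
  classical
  set mu : ℝ := lam₁ / (lam₂ + 1) with hmu_def
  have hmu : 0 < mu := div_pos hlam₁ (by linarith)
  set Zmu : ℝ := ∑ y, Real.exp (mu * r y) with hZmu_def
  have hZmu_pos : 0 < Zmu := Finset.sum_pos (fun y _ => Real.exp_pos _) univ_nonempty
  have hZ_pos : 0 < Z := hZ ▸ Finset.sum_pos (fun y _ => Real.exp_pos _) univ_nonempty
  -- constant from the uniform reference
  have hNpos : (0:ℝ) < 1 / (Fintype.card Y : ℝ) := by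
    have : (0:ℝ) < (Fintype.card Y : ℝ) := by
      exact_mod_cast Fintype.card_pos
    positivity
  set c : ℝ := (1 / (Fintype.card Y : ℝ)) ^ (lam₂ / (lam₂ + 1)) with hc_def
  have hc_pos : 0 < c := Real.rpow_pos_of_pos hNpos _
  have hexp_eq : ∀ y, lam₁ * r y / (lam₂ + 1) = mu * r y := by
    intro y; rw [hmu_def]; ring
  have hZ₂' : Z₂ = c * Zmu := by
    rw [hZ₂, hZmu_def, Finset.mul_sum]
    refine Finset.sum_congr rfl (fun y _ => ?_)
    rw [href y, hexp_eq y]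
  -- πQK is softmax at mu
  have hq : ∀ y, πQK y = Real.exp (mu * r y) / Zmu := by
    intro y
    rw [hπQK y, href y, hexp_eq y, hZ₂']
    rw [mul_div_mul_left _ _ (ne_of_gt hc_pos)]
  have hq_pos : ∀ y, 0 < πQK y := fun y => by
    rw [hq y]; positivity
  have hp_pos : ∀ y, 0 < πQ y := fun y => by
    rw [hπQ y]; positivity
  have sum_q : ∑ y, πQK y = 1 := by
    simp only [hq, div_eq_mul_inv, ← Finset.sum_mul]
    rw [← hZmu_def, mul_inv_cancel₀ (ne_of_gt hZmu_pos)]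
  have sum_p : ∑ y, πQ y = 1 := by
    simp only [hπQ, div_eq_mul_inv, ← Finset.sum_mul]
    rw [← hZ, mul_inv_cancel₀ (ne_of_gt hZ_pos)]
  -- log formulas
  have logp : ∀ y, Real.log (πQ y) = lam * r y - Real.log Z := by
    intro y
    rw [hπQ y, Real.log_div (Real.exp_ne_zero _) (ne_of_gt hZ_pos), Real.log_exp]
  have logq : ∀ y, Real.log (πQK y) = mu * r y - Real.log Zmu := by
    intro y
    rw [hq y, Real.log_div (Real.exp_ne_zero _) (ne_of_gt hZmu_pos), Real.log_exp]
  -- entropy of p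
  have Hp : (-∑ y, πQ y * Real.log (πQ y)) = Real.log Z - lam * ∑ y, πQ y * r y := by
    have : ∑ y, πQ y * Real.log (πQ y)
        = ∑ y, (lam * (πQ y * r y) - πQ y * Real.log Z) := by
      refine Finset.sum_congr rfl (fun y _ => ?_)
      rw [logp y]; ring
    rw [this, Finset.sum_sub_distrib, ← Finset.mul_sum, ← Finset.sum_mul, sum_p]
    ring
  -- Gibbs: -∑ q log q ≤ -∑ q log p
  have gibbs : (-∑ y, πQK y * Real.log (πQK y)) ≤ -∑ y, πQK y * Real.log (πQ y) := by
    have key : ∀ y, πQK y * Real.log (πQ y) - πQK y * Real.log (πQK y)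
        ≤ πQ y - πQK y := by
      intro y
      have h1 : Real.log (πQ y) - Real.log (πQK y) = Real.log (πQ y / πQK y) := by
        rw [Real.log_div (ne_of_gt (hp_pos y)) (ne_of_gt (hq_pos y))]
      have h2 : Real.log (πQ y / πQK y) ≤ πQ y / πQK y - 1 :=
        Real.log_le_sub_one_of_pos (div_pos (hp_pos y) (hq_pos y))
      have h3 : πQK y * (πQ y / πQK y - 1) = πQ y - πQK y := by
        have := ne_of_gt (hq_pos y); field_simp
      nlinarith [hq_pos y]
    have := Finset.sum_le_sum (fun y (_ : y ∈ Finset.univ) => key y)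
    rw [Finset.sum_sub_distrib, Finset.sum_sub_distrib, sum_p, sum_q] at this
    linarith
  have cross : -∑ y, πQK y * Real.log (πQ y) = Real.log Z - lam * ∑ y, πQK y * r y := by
    have : ∑ y, πQK y * Real.log (πQ y)
        = ∑ y, (lam * (πQK y * r y) - πQK y * Real.log Z) := by
      refine Finset.sum_congr rfl (fun y _ => ?_)
      rw [logp y]; ring
    rw [this, Finset.sum_sub_distrib, ← Finset.mul_sum, ← Finset.sum_mul, sum_q]
    ring
  -- expectation monotonicity
  have Emono : ∑ y, πQ y * r y ≤ ∑ y, πQK y * r y := by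
    have h := expectation_mono_aux r hlam_le
    have e1 : ∑ y, πQ y * r y = (∑ i, Real.exp (lam * r i) * r i) / Z := by
      rw [Finset.sum_div]
      refine Finset.sum_congr rfl (fun y _ => ?_)
      rw [hπQ y]; ring
    have e2 : ∑ y, πQK y * r y = (∑ i, Real.exp (mu * r i) * r i) / Zmu := by
      rw [Finset.sum_div]
      refine Finset.sum_congr rfl (fun y _ => ?_)
      rw [hq y]; ring
    rw [e1, e2, div_le_div_iff₀ hZ_pos hZmu_pos]
    rw [hZ, hZmu_def] at *
    exact h
  calc (-∑ y, πQK y * Real.log (πQK y))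
      ≤ -∑ y, πQK y * Real.log (πQ y) := gibbs
    _ = Real.log Z - lam * ∑ y, πQK y * r y := cross
    _ ≤ Real.log Z - lam * ∑ y, πQ y * r y := by
        have := mul_le_mul_of_nonneg_left Emono (le_of_lt hlam)
        linarith
    _ = (-∑ y, πQ y * Real.log (πQ y)) := Hp.symm
end

section
/- Let Y be a nonempty finite set and z : Y → ℝ. For s ∈ ℝ define the tempered softmax distribution p(s)(y) = exp(s·z(y)) / ∑_{y'∈Y} exp(s·z(y')) and its entropy H(s) = −∑_{y∈Y} p(s)(y)·ln p(s)(y). Then for all s₁, s₂ with 0 < s₁ < s₂, one has H(s₂) ≤ H(s₁); moreover H(s₂) = H(s₁) if and only if z is constant on Y. -/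
open Finset

/-- Gibbs' inequality on a finite type, with equality condition. -/
lemma gibbs_aux {Y : Type*} [Fintype Y] (p q : Y → ℝ)
    (hp : ∀ y, 0 < p y) (hq : ∀ y, 0 < q y)
    (hps : ∑ y, p y = 1) (hqs : ∑ y, q y = 1) :
    ∑ y, p y * Real.log (q y) ≤ ∑ y, p y * Real.log (p y) ∧
    ((∑ y, p y * Real.log (q y) = ∑ y, p y * Real.log (p y)) → p = q) := by
  have key : ∀ y : Y, p y * Real.log (q y) ≤ p y * Real.log (p y) + (q y - p y) := by
    intro y
    have h1 : Real.log (q y / p y) ≤ q y / p y - 1 :=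
      Real.log_le_sub_one_of_pos (div_pos (hq y) (hp y))
    have h2 : Real.log (q y / p y) = Real.log (q y) - Real.log (p y) :=
      Real.log_div (hq y).ne' (hp y).ne'
    have h3 : p y * (Real.log (q y) - Real.log (p y)) ≤ p y * (q y / p y - 1) := by
      rw [← h2]; exact mul_le_mul_of_nonneg_left h1 (hp y).le
    have h4 : p y * (q y / p y - 1) = q y - p y := by
      have hpne : p y ≠ 0 := (hp y).ne'
      field_simp
    nlinarith [h3, h4]
  have keystrict : ∀ y : Y, p y ≠ q y →
      p y * Real.log (q y) < p y * Real.log (p y) + (q y - p y) := by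
    intro y hne
    have h1 : Real.log (q y / p y) < q y / p y - 1 := by
      apply Real.log_lt_sub_one_of_pos (div_pos (hq y) (hp y))
      intro h
      exact hne ((div_eq_one_iff_eq (hp y).ne').mp h).symm
    have h2 : Real.log (q y / p y) = Real.log (q y) - Real.log (p y) :=
      Real.log_div (hq y).ne' (hp y).ne'
    have h3 : p y * (Real.log (q y) - Real.log (p y)) < p y * (q y / p y - 1) := by
      rw [← h2]; exact mul_lt_mul_of_pos_left h1 (hp y)
    have h4 : p y * (q y / p y - 1) = q y - p y := by
      have hpne : p y ≠ 0 := (hp y).ne'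
      field_simp
    nlinarith [h3, h4]
  have hsum : ∑ y, (p y * Real.log (p y) + (q y - p y)) = ∑ y, p y * Real.log (p y) := by
    rw [Finset.sum_add_distrib, Finset.sum_sub_distrib, hps, hqs]
    ring
  constructor
  · calc ∑ y, p y * Real.log (q y) ≤ ∑ y, (p y * Real.log (p y) + (q y - p y)) :=
          Finset.sum_le_sum fun y _ => key y
      _ = ∑ y, p y * Real.log (p y) := hsum
  · intro heq
    by_contra hne
    push_neg at hne
    obtain ⟨y₀, hy₀⟩ := Function.ne_iff.mp hne
    have : ∑ y, p y * Real.log (q y) < ∑ y, (p y * Real.log (p y) + (q y - p y)) :=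
      Finset.sum_lt_sum (fun y _ => key y) ⟨y₀, Finset.mem_univ _, keystrict y₀ hy₀⟩
    rw [hsum] at this
    exact absurd heq this.ne

/-- The entropy of the tempered softmax p(s)(y) = exp(s·z(y))/∑ exp(s·z(y'))
is nonincreasing in s > 0: for 0 < s₁ < s₂, H(s₂) ≤ H(s₁), with equality iff z is
constant. -/
theorem stmt_7 {Y : Type*} [Fintype Y] [Nonempty Y] (z : Y → ℝ)
    (p : ℝ → Y → ℝ) (hp : ∀ s y, p s y = Real.exp (s * z y) / ∑ y', Real.exp (s * z y'))
    (H : ℝ → ℝ) (hH : ∀ s, H s = -∑ y, p s y * Real.log (p s y))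
    (s₁ s₂ : ℝ) (hs₁ : 0 < s₁) (hs₁₂ : s₁ < s₂) :
    H s₂ ≤ H s₁ ∧ (H s₂ = H s₁ ↔ ∀ y y' : Y, z y = z y') := by
  set Z : ℝ → ℝ := fun s => ∑ y', Real.exp (s * z y') with hZdef
  have hZpos : ∀ s, 0 < Z s := fun s =>
    Finset.sum_pos (fun y _ => Real.exp_pos _) Finset.univ_nonempty
  have hppos : ∀ s y, 0 < p s y := by
    intro s y; rw [hp]
    exact div_pos (Real.exp_pos _) (hZpos s)
  have hpsum : ∀ s, ∑ y, p s y = 1 := by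
    intro s
    simp only [hp]
    rw [← Finset.sum_div]
    exact div_self (hZpos s).ne'
  have hlog : ∀ s y, Real.log (p s y) = s * z y - Real.log (Z s) := by
    intro s y
    rw [hp, Real.log_div (Real.exp_pos _).ne' (hZpos s).ne', Real.log_exp]
  set E : ℝ → ℝ := fun s => ∑ y, p s y * z y with hEdef
  have cross : ∀ s t, ∑ y, p s y * Real.log (p t y) = t * E s - Real.log (Z t) := by
    intro s t
    have : ∀ y : Y, p s y * Real.log (p t y)
        = t * (p s y * z y) - p s y * Real.log (Z t) := by
      intro y; rw [hlog]; ring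
    rw [Finset.sum_congr rfl fun y _ => this y, Finset.sum_sub_distrib,
      ← Finset.mul_sum, ← Finset.sum_mul, hpsum]
    ring
  have hHeq : ∀ s, H s = Real.log (Z s) - s * E s := by
    intro s; rw [hH, cross s s]; ring
  -- Gibbs inequalities
  have g21 := gibbs_aux (p s₂) (p s₁) (hppos s₂) (hppos s₁) (hpsum s₂) (hpsum s₁)
  have g12 := gibbs_aux (p s₁) (p s₂) (hppos s₁) (hppos s₂) (hpsum s₁) (hpsum s₂)
  have A : s₁ * E s₂ - Real.log (Z s₁) ≤ s₂ * E s₂ - Real.log (Z s₂) := by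
    have := g21.1; rwa [cross s₂ s₁, cross s₂ s₂] at this
  have B : s₂ * E s₁ - Real.log (Z s₂) ≤ s₁ * E s₁ - Real.log (Z s₁) := by
    have := g12.1; rwa [cross s₁ s₂, cross s₁ s₁] at this
  have hE : E s₁ ≤ E s₂ := by nlinarith [A, B]
  -- main inequality
  have main : H s₂ ≤ H s₁ := by
    rw [hHeq, hHeq]
    nlinarith [A, hE, hs₁]
  refine ⟨main, ?_, ?_⟩
  · -- equality → z constant
    intro heq
    have hA' : s₁ * E s₂ - Real.log (Z s₁) = s₂ * E s₂ - Real.log (Z s₂) := by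
      rw [hHeq, hHeq] at heq
      nlinarith [A, hE, hs₁]
    have hpeq : p s₂ = p s₁ := by
      apply g21.2
      rw [cross s₂ s₁, cross s₂ s₂, hA']
    intro y y'
    have h1 : Real.log (p s₂ y) = Real.log (p s₁ y) := by rw [hpeq]
    have h2 : Real.log (p s₂ y') = Real.log (p s₁ y') := by rw [hpeq]
    rw [hlog, hlog] at h1 h2
    have : (s₂ - s₁) * z y = (s₂ - s₁) * z y' := by linarith
    have hne : s₂ - s₁ ≠ 0 := by linarith
    exact mul_left_cancel₀ hne this
  · -- z constant → equality
    intro hz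
    obtain ⟨y₀⟩ := (inferInstance : Nonempty Y)
    have hpc : ∀ s y, p s y = (Fintype.card Y : ℝ)⁻¹ := by
      intro s y
      rw [hp]
      have : ∀ y' : Y, Real.exp (s * z y') = Real.exp (s * z y) := by
        intro y'; rw [hz y' y]
      rw [Finset.sum_congr rfl fun y' _ => this y']
      rw [Finset.sum_const, Finset.card_univ, nsmul_eq_mul]
      rw [div_mul_eq_div_div_swap, div_self (Real.exp_pos _).ne', one_div]
    have : ∀ s : ℝ, H s = -((Fintype.card Y : ℝ) *
        ((Fintype.card Y : ℝ)⁻¹ * Real.log (Fintype.card Y : ℝ)⁻¹)) := by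
      intro s
      rw [hH]
      rw [Finset.sum_congr rfl fun y _ => by rw [hpc s y]]
      rw [Finset.sum_const, Finset.card_univ, nsmul_eq_mul]
    rw [this s₁, this s₂]
end
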